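/- arXiv:2109.01070 — 2 statements merged into one kernel-verified Lean document; each statement's English description precedes it below -/
import Mathlib

section
/- For every r > 0 and every δ with 0 < δ < 1 there exists a function η : ℝ → ℝ such that: η is nonincreasing and Lipschitz, 0 ≤ η ≤ 1 everywhere, η(s) = 1 for all s ≤ r², η(s) = 0 for all s ≥ 4r², η is differentiable on the open interval (r², 4r²), and |η′(s)| ≤ (1/(3δr²))·η(s)^{1−δ} for every s ∈ (r², 4r²). -/
/-!
Take the clamped linear ramp `u`, equal to `1` before `r²`, to `0` after `4r²` and affine in
between, and put `η = u ^ (1/δ)`. On `(r², 4r²)` one has `|η'| = (1/(3δr²)) u ^ (1/δ - 1)`, and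
`u ^ (1/δ - 1) = η ^ (1 - δ)`. Since `1/δ ≥ 1`, the power `x ↦ x ^ (1/δ)` is Lipschitz on
`[0, 1]`, so `η` is Lipschitz as well.
-/

open Set

lemma lipschitzOnWith_rpow_Icc {p : ℝ} (hp : 1 ≤ p) :
    LipschitzOnWith p.toNNReal (fun x : ℝ => x ^ p) (Icc 0 1) := by
  refine (convex_Icc 0 1).lipschitzOnWith_of_nnnorm_deriv_le
    (fun x _ => (Real.hasDerivAt_rpow_const (Or.inr hp)).differentiableAt) fun x hx => ?_
  rw [Real.deriv_rpow_const, ← NNReal.coe_le_coe, coe_nnnorm, Real.norm_eq_abs,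
    Real.coe_toNNReal _ (by linarith), abs_mul, abs_of_nonneg (by linarith),
    abs_of_nonneg (Real.rpow_nonneg hx.1 _)]
  exact mul_le_of_le_one_right (by linarith) (Real.rpow_le_one hx.1 hx.2 (by linarith))

lemma LipschitzWith.rpow_const_of_mem_Icc {α : Type*} [PseudoEMetricSpace α] {f : α → ℝ}
    {K : NNReal} (hf : LipschitzWith K f) (hf01 : ∀ x, f x ∈ Icc 0 1) {p : ℝ} (hp : 1 ≤ p) :
    LipschitzWith (p.toNNReal * K) fun x => f x ^ p :=
  lipschitzOnWith_univ.1 <|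
    (lipschitzOnWith_rpow_Icc hp).comp (lipschitzOnWith_univ.2 hf) fun x _ => hf01 x

noncomputable def linearRamp (a b s : ℝ) : ℝ := min 1 (max ((b - s) / (b - a)) 0)

namespace linearRamp

variable {a b : ℝ}

lemma nonneg (s : ℝ) : 0 ≤ linearRamp a b s := le_min zero_le_one (le_max_right _ _)

lemma le_one (s : ℝ) : linearRamp a b s ≤ 1 := min_le_left _ _

lemma antitone (hab : a < b) : Antitone (linearRamp a b) := fun _ _ hst =>
  min_le_min_left _ <| max_le_max_right _ <| div_le_div_of_nonneg_right (by linarith) (by linarith)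

lemma eq_one (hab : a < b) {s : ℝ} (hs : s ≤ a) : linearRamp a b s = 1 :=
  min_eq_left <| le_max_of_le_left <| (one_le_div (by linarith)).2 (by linarith)

lemma eq_zero (hab : a < b) {s : ℝ} (hs : b ≤ s) : linearRamp a b s = 0 := by
  rw [linearRamp, max_eq_right (div_nonpos_of_nonpos_of_nonneg (by linarith) (by linarith)),
    min_eq_right zero_le_one]

lemma eqOn_Ioo : EqOn (linearRamp a b) (fun s => (b - s) / (b - a)) (Ioo a b) := by
  intro s ⟨has, hsb⟩
  have hpos : 0 < b - a := by linarith
  rw [linearRamp, max_eq_left (div_pos (by linarith) hpos).le,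
    min_eq_right ((div_le_one hpos).2 (by linarith))]

lemma lipschitzWith : LipschitzWith ‖(b - a)⁻¹‖₊ (linearRamp a b) := by
  have : LipschitzWith ‖(b - a)⁻¹‖₊ fun s => (b - s) / (b - a) := by
    refine LipschitzWith.of_dist_le_mul fun s t => ?_
    rw [dist_comm s, Real.dist_eq, Real.dist_eq, coe_nnnorm, Real.norm_eq_abs, ← abs_mul]
    exact le_of_eq (congrArg _ (by ring))
  exact (this.max_const 0).const_min 1

lemma hasDerivAt_rpow (p : ℝ) {s : ℝ} (hs : s ∈ Ioo a b) :
    HasDerivAt (fun s => linearRamp a b s ^ p)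
      (-(p / (b - a)) * linearRamp a b s ^ (p - 1)) s := by
  have hlin : HasDerivAt (fun s => (b - s) / (b - a)) (-1 / (b - a)) s := by
    simpa using ((hasDerivAt_id s).const_sub b).div_const (b - a)
  have hpos : 0 < (b - s) / (b - a) := div_pos (by linarith [hs.2]) (by linarith [hs.1, hs.2])
  have hev : (fun s => linearRamp a b s ^ p) =ᶠ[nhds s] fun s => ((b - s) / (b - a)) ^ p :=
    Filter.eventuallyEq_of_mem (isOpen_Ioo.mem_nhds hs) fun t ht => by rw [eqOn_Ioo ht]
  refine ((hlin.rpow_const (Or.inl hpos.ne')).congr_of_eventuallyEq hev).congr_deriv ?_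
  rw [eqOn_Ioo hs]
  ring

lemma abs_deriv_rpow_inv {δ : ℝ} (hδ : 0 < δ) {s : ℝ} (hs : s ∈ Ioo a b) :
    |deriv (fun s => linearRamp a b s ^ δ⁻¹) s| =
      1 / (δ * (b - a)) * (linearRamp a b s ^ δ⁻¹) ^ (1 - δ) := by
  have hu := nonneg (a := a) (b := b) s
  have hba : 0 < b - a := by linarith [hs.1, hs.2]
  rw [(hasDerivAt_rpow δ⁻¹ hs).deriv, ← Real.rpow_mul hu, mul_one_sub, inv_mul_cancel₀ hδ.ne',
    abs_mul, abs_neg, abs_of_pos (by positivity), abs_of_nonneg (Real.rpow_nonneg hu _)]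
  field_simp

end linearRamp

/-- For every `r > 0` and `0 < δ < 1` there is a function `η : ℝ → ℝ` that is
nonincreasing and Lipschitz, satisfies `0 ≤ η ≤ 1`, equals `1` on `(-∞, r²]`,
vanishes on `[4r², ∞)`, is differentiable on `(r², 4r²)`, and satisfies
`|η′(s)| ≤ (1/(3δr²)) · η(s)^(1-δ)` for all `s ∈ (r², 4r²)`. -/
theorem exists_cutoff_function (r δ : ℝ) (hr : 0 < r) (hδ0 : 0 < δ) (hδ1 : δ < 1) :
    ∃ η : ℝ → ℝ,
      Antitone η ∧
      (∃ L : NNReal, LipschitzWith L η) ∧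
      (∀ s, 0 ≤ η s ∧ η s ≤ 1) ∧
      (∀ s, s ≤ r ^ 2 → η s = 1) ∧
      (∀ s, 4 * r ^ 2 ≤ s → η s = 0) ∧
      DifferentiableOn ℝ η (Set.Ioo (r ^ 2) (4 * r ^ 2)) ∧
      (∀ s ∈ Set.Ioo (r ^ 2) (4 * r ^ 2),
        |deriv η s| ≤ 1 / (3 * δ * r ^ 2) * (η s) ^ (1 - δ)) := by
  have hab : r ^ 2 < 4 * r ^ 2 := by nlinarith [pow_pos hr 2]
  have hp : 1 ≤ δ⁻¹ := (one_le_inv₀ hδ0).2 hδ1.le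
  open linearRamp in
  refine ⟨fun s => linearRamp (r ^ 2) (4 * r ^ 2) s ^ δ⁻¹,
    fun s t hst => Real.rpow_le_rpow (nonneg t) (antitone hab hst) (by positivity),
    ⟨_, linearRamp.lipschitzWith.rpow_const_of_mem_Icc (fun s => ⟨nonneg s, le_one s⟩) hp⟩,
    fun s => ⟨Real.rpow_nonneg (nonneg s) _, Real.rpow_le_one (nonneg s) (le_one s) (by positivity)⟩,
    fun s hs => by simp only [eq_one hab hs, Real.one_rpow],
    fun s hs => by simp only [eq_zero hab hs, Real.zero_rpow (inv_ne_zero hδ0.ne')],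
    fun s hs => (hasDerivAt_rpow _ hs).differentiableAt.differentiableWithinAt,
    fun s hs => ?_⟩
  rw [abs_deriv_rpow_inv hδ0 hs, show 3 * δ * r ^ 2 = δ * (4 * r ^ 2 - r ^ 2) by ring]
end

section
/- Let μ be a measure on a measurable space X, let f, g : X → ℝ be measurable with f ≥ 0 and g ≥ 0, and let b > 0. Assume that ∫_X g·e^{−f} dμ < ∞ and that ∫_X f·g·e^{−f} dμ ≤ 2b·∫_X g·e^{−f} dμ. Then for every r > 0, ∫_{{x : f(x) ≤ r²}} g dμ ≤ (2e^{r²} + 1)·∫_{{x : f(x) ≤ 3b}} g dμ, where integrals of nonnegative functions are taken in [0, ∞]. -/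
open MeasureTheory Set
open scoped ENNReal

/-! The measure `ν = g e^{-f} μ` is finite and its `f`-moment is at most `2b · ν(X)`, so Markov's
inequality at level `3b` gives `ν{f > 3b} ≤ 2 ν{f ≤ 3b}`. On `{f ≤ r²}` we have
`g ≤ e^{r²} g e^{-f}`, hence the part of `∫_{f ≤ r²} g` lying in `{f > 3b}` is at most
`e^{r²} ν{f > 3b} ≤ 2 e^{r²} ν{f ≤ 3b} ≤ 2 e^{r²} ∫_{f ≤ 3b} g`, the last step because
`e^{-f} ≤ 1`. -/

section Markov

variable {X : Type*} [MeasurableSpace X] {ν : Measure X} [IsFiniteMeasure ν]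

theorem mul_measure_lt_le_of_lintegral_le {F : X → ℝ≥0∞} (hF : AEMeasurable F ν)
    {a c : ℝ≥0∞} (hc : c ≠ ∞) (h : ∫⁻ x, F x ∂ν ≤ c * ν univ) :
    a * ν {x | a + c < F x} ≤ c * ν {x | F x ≤ a + c} := by
  set T := {x | a + c < F x}
  have hcompl : Tᶜ = {x | F x ≤ a + c} := by ext; simp [T]
  have hsplit : ν univ = ν T + ν {x | F x ≤ a + c} := by
    rw [← hcompl, measure_add_measure_compl₀ (nullMeasurableSet_lt aemeasurable_const hF)]
  have hmarkov : (a + c) * ν T ≤ ∫⁻ x, F x ∂ν :=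
    calc (a + c) * ν T ≤ (a + c) * ν {x | a + c ≤ F x} := by
          gcongr; exact fun x (hx : a + c < F x) => hx.le
      _ ≤ ∫⁻ x, F x ∂ν := mul_meas_ge_le_lintegral₀ hF _
  refine (ENNReal.add_le_add_iff_left (ENNReal.mul_ne_top hc (measure_ne_top ν T))).1 ?_
  calc c * ν T + a * ν T = (a + c) * ν T := by rw [add_comm, add_mul]
    _ ≤ c * ν univ := hmarkov.trans h
    _ = c * ν T + c * ν {x | F x ≤ a + c} := by rw [hsplit, mul_add]

theorem measure_lt_three_mul_le_of_lintegral_le {f : X → ℝ} (hf : Measurable f) {b : ℝ}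
    (hb : 0 < b) (h : ∫⁻ x, ENNReal.ofReal (f x) ∂ν ≤ ENNReal.ofReal (2 * b) * ν univ) :
    ν {x | 3 * b < f x} ≤ 2 * ν {x | f x ≤ 3 * b} := by
  have h3b : ENNReal.ofReal b + ENNReal.ofReal (2 * b) = ENNReal.ofReal (3 * b) := by
    rw [← ENNReal.ofReal_add hb.le (by positivity)]; ring_nf
  have key := mul_measure_lt_le_of_lintegral_le (a := ENNReal.ofReal b)
    hf.ennreal_ofReal.aemeasurable ENNReal.ofReal_ne_top h
  have h3b0 : (0 : ℝ) ≤ 3 * b := by positivity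
  simp only [h3b, ENNReal.ofReal_lt_ofReal_iff_of_nonneg h3b0, ENNReal.ofReal_le_ofReal_iff h3b0]
    at key
  rw [ENNReal.ofReal_mul zero_le_two, ENNReal.ofReal_ofNat, mul_comm 2, mul_assoc] at key
  exact (ENNReal.mul_le_mul_iff_right (by simpa using hb) ENNReal.ofReal_ne_top).1 key

end Markov

section ExpWeight

variable {X : Type*} [MeasurableSpace X] {μ : Measure X} {f : X → ℝ} {G : X → ℝ≥0∞}

theorem withDensity_mul_exp_neg_le_setLIntegral (hf0 : ∀ x, 0 ≤ f x) {s : Set X}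
    (hs : MeasurableSet s) :
    μ.withDensity (fun x => G x * ENNReal.ofReal (Real.exp (-f x))) s ≤ ∫⁻ x in s, G x ∂μ := by
  rw [withDensity_apply _ hs]
  refine setLIntegral_mono' hs fun x _ => mul_le_of_le_one_right' ?_
  exact ENNReal.ofReal_le_one.2 (Real.exp_le_one_iff.2 (neg_nonpos.2 (hf0 x)))

theorem setLIntegral_le_exp_mul_withDensity {r : ℝ} {s : Set X} (hs : MeasurableSet s)
    (hfr : ∀ x ∈ s, f x ≤ r) :
    ∫⁻ x in s, G x ∂μ ≤ ENNReal.ofReal (Real.exp r) *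
      μ.withDensity (fun x => G x * ENNReal.ofReal (Real.exp (-f x))) s := by
  rw [withDensity_apply _ hs, ← lintegral_const_mul' _ _ ENNReal.ofReal_ne_top]
  refine setLIntegral_mono' hs fun x hx => ?_
  have hone : 1 ≤ ENNReal.ofReal (Real.exp r) * ENNReal.ofReal (Real.exp (-f x)) := by
    rw [← ENNReal.ofReal_mul (Real.exp_pos r).le, ← Real.exp_add]
    exact ENNReal.one_le_ofReal.2 (Real.one_le_exp (by linarith [hfr x hx]))
  calc G x ≤ G x * (ENNReal.ofReal (Real.exp r) * ENNReal.ofReal (Real.exp (-f x))) :=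
        le_mul_of_one_le_right' hone
    _ = _ := by ring

theorem setLIntegral_sublevel_le_of_withDensity_tail_le (hf : Measurable f) (hf0 : ∀ x, 0 ≤ f x)
    {a r : ℝ} {C : ℝ≥0∞}
    (htail : μ.withDensity (fun x => G x * ENNReal.ofReal (Real.exp (-f x))) {x | a < f x} ≤
      C * μ.withDensity (fun x => G x * ENNReal.ofReal (Real.exp (-f x))) {x | f x ≤ a}) :
    ∫⁻ x in {x | f x ≤ r}, G x ∂μ ≤
      (C * ENNReal.ofReal (Real.exp r) + 1) * ∫⁻ x in {x | f x ≤ a}, G x ∂μ := by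
  set ν := μ.withDensity (fun x => G x * ENNReal.ofReal (Real.exp (-f x)))
  have hfar : MeasurableSet ({x | f x ≤ r} ∩ {x | a < f x}) :=
    (hf measurableSet_Iic).inter (hf measurableSet_Ioi)
  have hcover : {x | f x ≤ r} ⊆ {x | f x ≤ a} ∪ ({x | f x ≤ r} ∩ {x | a < f x}) := by
    intro x hx
    by_cases hxa : f x ≤ a
    · exact Or.inl hxa
    · exact Or.inr ⟨hx, not_le.1 hxa⟩
  have hfar_le : ∫⁻ x in {x | f x ≤ r} ∩ {x | a < f x}, G x ∂μ ≤
      C * ENNReal.ofReal (Real.exp r) * ∫⁻ x in {x | f x ≤ a}, G x ∂μ :=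
    calc _ ≤ ENNReal.ofReal (Real.exp r) * ν ({x | f x ≤ r} ∩ {x | a < f x}) :=
          setLIntegral_le_exp_mul_withDensity hfar fun x hx => hx.1
      _ ≤ ENNReal.ofReal (Real.exp r) * (C * ν {x | f x ≤ a}) := by
          gcongr; exact (measure_mono inter_subset_right).trans htail
      _ ≤ ENNReal.ofReal (Real.exp r) * (C * ∫⁻ x in {x | f x ≤ a}, G x ∂μ) := by
          gcongr; exact withDensity_mul_exp_neg_le_setLIntegral hf0 (hf measurableSet_Iic)
      _ = _ := by ring
  calc ∫⁻ x in {x | f x ≤ r}, G x ∂μ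
      ≤ ∫⁻ x in {x | f x ≤ a} ∪ ({x | f x ≤ r} ∩ {x | a < f x}), G x ∂μ :=
        lintegral_mono_set hcover
    _ ≤ _ := lintegral_union_le _ _ _
    _ ≤ ∫⁻ x in {x | f x ≤ a}, G x ∂μ +
          C * ENNReal.ofReal (Real.exp r) * ∫⁻ x in {x | f x ≤ a}, G x ∂μ := by gcongr
    _ = _ := by ring

end ExpWeight

theorem local_to_global_energy_bound_general
    {X : Type*} [MeasurableSpace X] (μ : Measure X)
    (f g : X → ℝ) (hf : Measurable f) (hg : Measurable g)
    (hf0 : ∀ x, 0 ≤ f x) (b : ℝ) (hb : 0 < b)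
    (hfin : ∫⁻ x, ENNReal.ofReal (g x * Real.exp (-f x)) ∂μ < ⊤)
    (hineq : ∫⁻ x, ENNReal.ofReal (f x * g x * Real.exp (-f x)) ∂μ ≤
      ENNReal.ofReal (2 * b) * ∫⁻ x, ENNReal.ofReal (g x * Real.exp (-f x)) ∂μ) :
    ∀ r : ℝ, 0 < r →
      ∫⁻ x in {x | f x ≤ r ^ 2}, ENNReal.ofReal (g x) ∂μ ≤
        ENNReal.ofReal (2 * Real.exp (r ^ 2) + 1) *
          ∫⁻ x in {x | f x ≤ 3 * b}, ENNReal.ofReal (g x) ∂μ := by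
  intro r _
  have hdensity : (fun x => ENNReal.ofReal (g x * Real.exp (-f x))) =
      fun x => ENNReal.ofReal (g x) * ENNReal.ofReal (Real.exp (-f x)) :=
    funext fun x => ENNReal.ofReal_mul' (Real.exp_pos _).le
  set ν := μ.withDensity fun x => ENNReal.ofReal (g x) * ENNReal.ofReal (Real.exp (-f x))
  have hν_univ : ν univ = ∫⁻ x, ENNReal.ofReal (g x * Real.exp (-f x)) ∂μ := by
    rw [withDensity_apply _ MeasurableSet.univ, Measure.restrict_univ, hdensity]
  have : IsFiniteMeasure ν := ⟨hν_univ ▸ hfin⟩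
  have hmean : ∫⁻ x, ENNReal.ofReal (f x) ∂ν ≤ ENNReal.ofReal (2 * b) * ν univ := by
    have hdens_meas :
        Measurable fun x => ENNReal.ofReal (g x) * ENNReal.ofReal (Real.exp (-f x)) := by
      fun_prop
    rw [hν_univ, lintegral_withDensity_eq_lintegral_mul _ hdens_meas hf.ennreal_ofReal]
    convert hineq using 3 with x
    rw [mul_assoc, ENNReal.ofReal_mul (hf0 x), ← hdensity, Pi.mul_apply, mul_comm]
  have htail := measure_lt_three_mul_le_of_lintegral_le hf hb hmean
  calc _ ≤ (2 * ENNReal.ofReal (Real.exp (r ^ 2)) + 1) *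
        ∫⁻ x in {x | f x ≤ 3 * b}, ENNReal.ofReal (g x) ∂μ :=
      setLIntegral_sublevel_le_of_withDensity_tail_le hf hf0 htail
    _ = _ := by
      rw [ENNReal.ofReal_add (by positivity) zero_le_one, ENNReal.ofReal_mul zero_le_two,
        ENNReal.ofReal_ofNat, ENNReal.ofReal_one]

/-- Measure-theoretic core of the energy bound: if `f, g ≥ 0` are measurable,
`∫ g e^{-f} dμ < ∞` and `∫ f g e^{-f} dμ ≤ 2b ∫ g e^{-f} dμ` for some `b > 0`,
then for every `r > 0`,
`∫_{f ≤ r²} g dμ ≤ (2e^{r²} + 1) ∫_{f ≤ 3b} g dμ`. Integrals of nonnegative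
functions are taken in `[0, ∞]`. -/
theorem local_to_global_energy_bound
    {X : Type*} [MeasurableSpace X] (μ : Measure X)
    (f g : X → ℝ) (hf : Measurable f) (hg : Measurable g)
    (hf0 : ∀ x, 0 ≤ f x) (hg0 : ∀ x, 0 ≤ g x) (b : ℝ) (hb : 0 < b)
    (hfin : ∫⁻ x, ENNReal.ofReal (g x * Real.exp (-f x)) ∂μ < ⊤)
    (hineq : ∫⁻ x, ENNReal.ofReal (f x * g x * Real.exp (-f x)) ∂μ ≤
      ENNReal.ofReal (2 * b) * ∫⁻ x, ENNReal.ofReal (g x * Real.exp (-f x)) ∂μ) :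
    ∀ r : ℝ, 0 < r →
      ∫⁻ x in {x | f x ≤ r ^ 2}, ENNReal.ofReal (g x) ∂μ ≤
        ENNReal.ofReal (2 * Real.exp (r ^ 2) + 1) *
          ∫⁻ x in {x | f x ≤ 3 * b}, ENNReal.ofReal (g x) ∂μ :=
  local_to_global_energy_bound_general μ f g hf hg hf0 b hb hfin hineq
end
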